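/- arXiv:0810.3305 — 3 statements merged into one kernel-verified Lean document; each statement's English description precedes it below -/
import Mathlib

section
/- Let $\mathcal{X}_y=\{\varphi\in\mathscr{D}(L): (L\varphi, y-H\varphi)\in\mathcal{G}\}$ with $\mathcal{G}$ a convex closed bounded subset of $\mathcal{F}\times\mathcal{Y}$, and assume $\mathcal{X}_y\neq\varnothing$. Then for any direction $\ell$ with finite minimax a posteriori error, the minimax a posteriori estimation value and error are $(\ell,\hat\varphi)=\tfrac12(c(\mathcal{X}_y,\ell)-c(\mathcal{X}_y,-\ell))$ and $\hat d(\ell)=\tfrac12(c(\mathcal{X}_y,\ell)+c(\mathcal{X}_y,-\ell))$, where $c(\mathcal{X}_y,\ell)=\sup_{\psi\in\mathcal{X}_y}(\ell,\psi)$. -/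
open LinearPMap

variable {H F Y : Type*}
  [NormedAddCommGroup H] [InnerProductSpace ℝ H] [CompleteSpace H]
  [NormedAddCommGroup F] [InnerProductSpace ℝ F] [CompleteSpace F]
  [NormedAddCommGroup Y] [InnerProductSpace ℝ Y] [CompleteSpace Y]

/-- The support function `c(X, ℓ) = sup_{ψ ∈ X} (ℓ, ψ)`, with values in `EReal`. -/
noncomputable def supportFn (X : Set H) (ℓ : H) : EReal :=
  ⨆ ψ ∈ X, ((inner ℝ ℓ ψ : ℝ) : EReal)

/-- The a posteriori set `𝒳_y = {φ ∈ 𝒟(L) : (Lφ, y - Hφ) ∈ 𝒢}`. -/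
def aPostSet (L : H →ₗ.[ℝ] F) (Hop : H →L[ℝ] Y) (G : Set (F × Y)) (y : Y) : Set H :=
  {x : H | ∃ hx : x ∈ L.domain, (L ⟨x, hx⟩, y - Hop x) ∈ G}

/-- The minimax a posteriori error `d̂(ℓ) = inf_{φ ∈ 𝒳_y} sup_{ψ ∈ 𝒳_y} |(ℓ, φ) - (ℓ, ψ)|`. -/
noncomputable def aPostErr (X : Set H) (ℓ : H) : EReal :=
  ⨅ φ ∈ X, ⨆ ψ ∈ X, ((|(inner ℝ ℓ φ : ℝ) - (inner ℝ ℓ ψ : ℝ)| : ℝ) : EReal)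

/-- A bounded-above `EReal`-valued supremum of real values over a nonempty set is a real
number, which is the least upper bound up to `ε`. -/
lemma ereal_biSup_real {α : Type*} (X : Set α) (g : α → ℝ) (ψ₀ : α) (h₀ : ψ₀ ∈ X)
    (M : ℝ) (hM : ∀ ψ ∈ X, g ψ ≤ M) :
    ∃ c : ℝ, (⨆ ψ ∈ X, ((g ψ : ℝ) : EReal)) = (c : EReal) ∧
      (∀ ψ ∈ X, g ψ ≤ c) ∧ ∀ ε > 0, ∃ ψ ∈ X, c - ε < g ψ := by
  set S := ⨆ ψ ∈ X, ((g ψ : ℝ) : EReal) with hS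
  have hub : S ≤ (M : EReal) :=
    iSup₂_le fun ψ hψ => EReal.coe_le_coe_iff.2 (hM ψ hψ)
  have hlb : ((g ψ₀ : ℝ) : EReal) ≤ S := le_iSup₂ (f := fun ψ (_ : ψ ∈ X) => ((g ψ : ℝ) : EReal)) ψ₀ h₀
  have hnetop : S ≠ ⊤ := (hub.trans_lt (EReal.coe_lt_top M)).ne
  have hnebot : S ≠ ⊥ := fun h => ((EReal.bot_lt_coe (g ψ₀)).not_ge (h ▸ hlb))
  refine ⟨S.toReal, (EReal.coe_toReal hnetop hnebot).symm, ?_, ?_⟩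
  · intro ψ hψ
    have h1 : ((g ψ : ℝ) : EReal) ≤ S := le_iSup₂ (f := fun ψ (_ : ψ ∈ X) => ((g ψ : ℝ) : EReal)) ψ hψ
    rw [← EReal.coe_toReal hnetop hnebot] at h1
    exact EReal.coe_le_coe_iff.1 h1
  · intro ε hε
    by_contra hcon
    push_neg at hcon
    have h2 : S ≤ ((S.toReal - ε : ℝ) : EReal) :=
      iSup₂_le fun ψ hψ => EReal.coe_le_coe_iff.2 (by linarith [hcon ψ hψ])
    rw [← EReal.coe_toReal hnetop hnebot] at h2
    have h3 := EReal.coe_le_coe_iff.1 h2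
    rw [EReal.toReal_coe] at h3
    linarith

/-- for `𝒢` convex closed bounded and `𝒳_y ≠ ∅`, if `ℓ` has finite minimax
a posteriori error and `φ̂ ∈ 𝒳_y` attains it, then `(ℓ, φ̂) = ½(c(𝒳_y, ℓ) - c(𝒳_y, -ℓ))` and
`d̂(ℓ) = ½(c(𝒳_y, ℓ) + c(𝒳_y, -ℓ))`. -/
theorem a_posteriori_estimation (L : H →ₗ.[ℝ] F)
    (hLclosed : L.IsClosed) (hLdense : Dense (L.domain : Set H))
    (Hop : H →L[ℝ] Y) (y : Y)
    (G : Set (F × Y)) (hGconv : Convex ℝ G) (hGclosed : IsClosed G)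
    (hGbdd : Bornology.IsBounded G)
    (hXne : (aPostSet L Hop G y).Nonempty)
    (ℓ : H) (hfin : aPostErr (aPostSet L Hop G y) ℓ < ⊤)
    (φhat : H) (hφhat : φhat ∈ aPostSet L Hop G y)
    (hmin : (⨆ ψ ∈ aPostSet L Hop G y,
        ((|(inner ℝ ℓ φhat : ℝ) - (inner ℝ ℓ ψ : ℝ)| : ℝ) : EReal)) =
      aPostErr (aPostSet L Hop G y) ℓ) :
    ((inner ℝ ℓ φhat : ℝ) : EReal) =
      (((2 : ℝ)⁻¹ : ℝ) : EReal) *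
        (supportFn (aPostSet L Hop G y) ℓ - supportFn (aPostSet L Hop G y) (-ℓ)) ∧
    aPostErr (aPostSet L Hop G y) ℓ =
      (((2 : ℝ)⁻¹ : ℝ) : EReal) *
        (supportFn (aPostSet L Hop G y) ℓ + supportFn (aPostSet L Hop G y) (-ℓ)) := by
  classical
  set X := aPostSet L Hop G y with hXdef
  set r : H → ℝ := fun ψ => (inner ℝ ℓ ψ : ℝ) with hr
  set a : ℝ := r φhat with ha
  -- X is convex
  have hXconv : Convex ℝ X := by
    intro x₁ hx₁ x₂ hx₂ s t hs ht hst
    obtain ⟨h₁, hg₁⟩ := hx₁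
    obtain ⟨h₂, hg₂⟩ := hx₂
    have hmem : s • x₁ + t • x₂ ∈ L.domain :=
      add_mem (Submodule.smul_mem _ _ h₁) (Submodule.smul_mem _ _ h₂)
    refine ⟨hmem, ?_⟩
    have hsub : (⟨s • x₁ + t • x₂, hmem⟩ : L.domain)
        = s • (⟨x₁, h₁⟩ : L.domain) + t • (⟨x₂, h₂⟩ : L.domain) := rfl
    have hL : L ⟨s • x₁ + t • x₂, hmem⟩ = s • L ⟨x₁, h₁⟩ + t • L ⟨x₂, h₂⟩ := by
      rw [hsub, LinearPMap.map_add, LinearPMap.map_smul, LinearPMap.map_smul]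
    have ht' : t = 1 - s := by linarith
    subst ht'
    have hH : y - Hop (s • x₁ + (1 - s) • x₂)
        = s • (y - Hop x₁) + (1 - s) • (y - Hop x₂) := by
      have e : Hop (s • x₁ + (1 - s) • x₂) = s • Hop x₁ + (1 - s) • Hop x₂ := by
        rw [_root_.map_add, _root_.map_smul, _root_.map_smul]
      rw [e]
      module
    have hmemG := hGconv hg₁ hg₂ hs ht hst
    have : (L ⟨s • x₁ + (1 - s) • x₂, hmem⟩, y - Hop (s • x₁ + (1 - s) • x₂))
        = s • ((L ⟨x₁, h₁⟩, y - Hop x₁) : F × Y) + (1 - s) • (L ⟨x₂, h₂⟩, y - Hop x₂) := by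
      rw [Prod.ext_iff]
      constructor
      · simpa using hL
      · simpa using hH
    rw [this]
    exact hmemG
  -- the error is a nonnegative real number d
  have d0 : (0 : EReal) ≤ aPostErr X ℓ := by
    rw [← hmin]
    have h0 : ((|(inner ℝ ℓ φhat : ℝ) - (inner ℝ ℓ φhat : ℝ)| : ℝ) : EReal)
        ≤ ⨆ ψ ∈ X, ((|(inner ℝ ℓ φhat : ℝ) - (inner ℝ ℓ ψ : ℝ)| : ℝ) : EReal) :=
      le_iSup₂ (f := fun ψ (_ : ψ ∈ X) => ((|(inner ℝ ℓ φhat : ℝ) - (inner ℝ ℓ ψ : ℝ)| : ℝ) : EReal)) φhat hφhat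
    simpa using h0
  have hnebot : aPostErr X ℓ ≠ ⊥ := fun h => by
    rw [h] at d0
    exact (EReal.bot_lt_coe 0).not_ge (by simpa using d0)
  set d : ℝ := (aPostErr X ℓ).toReal with hddef
  have hd : aPostErr X ℓ = (d : EReal) := (EReal.coe_toReal hfin.ne hnebot).symm
  have hd0 : (0 : ℝ) ≤ d := by
    rw [hd] at d0
    exact_mod_cast d0
  have hsup_d : (⨆ ψ ∈ X, ((|a - r ψ| : ℝ) : EReal)) = (d : EReal) := hmin.trans hd
  -- every point of X is within d of a
  have hbd : ∀ ψ ∈ X, |a - r ψ| ≤ d := by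
    intro ψ hψ
    have h1 : ((|a - r ψ| : ℝ) : EReal) ≤ ⨆ ψ ∈ X, ((|a - r ψ| : ℝ) : EReal) :=
      le_iSup₂ (f := fun ψ (_ : ψ ∈ X) => ((|a - r ψ| : ℝ) : EReal)) ψ hψ
    rw [hsup_d] at h1
    exact EReal.coe_le_coe_iff.1 h1
  -- the two support values are real
  obtain ⟨cp, hcp_eq, hcp_ub, hcp_approx⟩ :=
    ereal_biSup_real X r φhat hφhat (a + d)
      (fun ψ hψ => by have := hbd ψ hψ; rw [abs_le] at this; linarith [this.1])
  obtain ⟨cm, hcm_eq, hcm_ub, hcm_approx⟩ :=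
    ereal_biSup_real X (fun ψ => -r ψ) φhat hφhat (d - a)
      (fun ψ hψ => by have := hbd ψ hψ; rw [abs_le] at this; show -r ψ ≤ d - a; linarith [this.2])
  have hcpS : supportFn X ℓ = (cp : EReal) := hcp_eq
  have hcmS : supportFn X (-ℓ) = (cm : EReal) := by
    rw [supportFn]
    simp only [inner_neg_left]
    exact_mod_cast hcm_eq
  have hacp : a ≤ cp := hcp_ub φhat hφhat
  have hacm : -a ≤ cm := hcm_ub φhat hφhat
  -- lower bounds from the optimal point
  have hcp_le : cp ≤ a + d := by
    by_contra hcon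
    push_neg at hcon
    obtain ⟨ψ, hψ, hgt⟩ := hcp_approx (cp - (a + d)) (by linarith)
    have := hbd ψ hψ
    rw [abs_le] at this
    linarith [this.1]
  have hcm_le : cm ≤ d - a := by
    by_contra hcon
    push_neg at hcon
    obtain ⟨ψ, hψ, hgt⟩ := hcm_approx (cm - (d - a)) (by linarith)
    have hgt' : cm - (cm - (d - a)) < -r ψ := hgt
    have := hbd ψ hψ
    rw [abs_le] at this
    linarith [this.2]
  -- upper bound via convexity : d ≤ (cp + cm)/2
  have hdle : d ≤ (cp + cm) / 2 := by
    refine le_of_forall_pos_le_add ?_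
    intro ε hε
    obtain ⟨ψ₁, hψ₁, hv₁⟩ := hcp_approx ε hε
    obtain ⟨ψ₂, hψ₂, hv₂''⟩ := hcm_approx ε hε
    have hv₂' : cm - ε < -r ψ₂ := hv₂''
    have hv₂ : r ψ₂ < -cm + ε := by linarith
    set t : ℝ := (cp - cm) / 2 with htdef
    have hcpcm : 0 ≤ cp + cm := by linarith
    -- construct φ ∈ X with |r φ - t| ≤ ε
    have hkey : ∃ φ ∈ X, |r φ - t| ≤ ε := by
      rcases le_or_gt (r ψ₁) t with hc1 | hc1
      · exact ⟨ψ₁, hψ₁, by rw [abs_le]; constructor <;> [linarith; linarith]⟩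
      · rcases le_or_gt t (r ψ₂) with hc2 | hc2
        · exact ⟨ψ₂, hψ₂, by rw [abs_le]; constructor <;> [linarith; linarith]⟩
        · -- r ψ₂ < t < r ψ₁ : interpolate
          set s : ℝ := (t - r ψ₂) / (r ψ₁ - r ψ₂) with hsdef
          have hden : 0 < r ψ₁ - r ψ₂ := by linarith
          have hs0 : 0 ≤ s := div_nonneg (by linarith) hden.le
          have hs1 : s ≤ 1 := by
            rw [div_le_one hden]; linarith
          refine ⟨s • ψ₁ + (1 - s) • ψ₂,
            hXconv hψ₁ hψ₂ hs0 (by linarith) (by ring), ?_⟩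
          have hrval : r (s • ψ₁ + (1 - s) • ψ₂) = s * r ψ₁ + (1 - s) * r ψ₂ := by
            simp [hr, inner_add_right, inner_smul_right]
          have hst : s * r ψ₁ + (1 - s) * r ψ₂ = t := by
            rw [hsdef]
            field_simp
            ring
          rw [hrval, hst]
          simpa using hε.le
    obtain ⟨φ, hφ, hφt⟩ := hkey
    rw [abs_le] at hφt
    simp only [htdef] at hφt
    have hsupφ : (⨆ ψ ∈ X, ((|r φ - r ψ| : ℝ) : EReal)) ≤ (((cp + cm) / 2 + ε : ℝ) : EReal) := by
      refine iSup₂_le fun ψ hψ => EReal.coe_le_coe_iff.2 ?_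
      have h1 : r ψ ≤ cp := hcp_ub ψ hψ
      have h2 : -r ψ ≤ cm := hcm_ub ψ hψ
      rw [abs_le]
      exact ⟨by linarith [hφt.1, hφt.2], by linarith [hφt.1, hφt.2]⟩
    have hinf : aPostErr X ℓ ≤ ⨆ ψ ∈ X, ((|r φ - r ψ| : ℝ) : EReal) := iInf₂_le φ hφ
    rw [hd] at hinf
    exact EReal.coe_le_coe_iff.1 (hinf.trans hsupφ)
  -- conclude the real identities
  have hdeq : d = (cp + cm) / 2 := by linarith
  have haeq : a = (cp - cm) / 2 := by linarith
  constructor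
  · rw [hcpS, hcmS, show ((inner ℝ ℓ φhat : ℝ) : EReal) = (a : EReal) from rfl]
    rw [← EReal.coe_sub, ← EReal.coe_mul]
    exact_mod_cast congrArg (fun x : ℝ => (x : EReal)) (by rw [haeq]; ring)
  · rw [hd, hcpS, hcmS, ← EReal.coe_add, ← EReal.coe_mul]
    exact_mod_cast congrArg (fun x : ℝ => (x : EReal)) (by rw [hdeq]; ring)
end

section
/- For a convex closed bounded set $\mathcal{G}\subset\mathcal{F}\times\mathcal{Y}$, the support function domain of the a posteriori set $\mathcal{X}_y=\{\varphi\in\mathscr{D}(L):(L\varphi,y-H\varphi)\in\mathcal{G}\}$ satisfies $R(L^*)+R(H^*) \subset \operatorname{dom} c(\mathcal{X}_y,\cdot)\cap(-1)\operatorname{dom} c(\mathcal{X}_y,\cdot)\subset \overline{R(L^*)+R(H^*)}$. -/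
open LinearPMap
open scoped Pointwise

variable {H F Y : Type*}
  [NormedAddCommGroup H] [InnerProductSpace ℝ H] [CompleteSpace H]
  [NormedAddCommGroup F] [InnerProductSpace ℝ F] [CompleteSpace F]
  [NormedAddCommGroup Y] [InnerProductSpace ℝ Y] [CompleteSpace Y]

lemma supportFn_lt_top_of_bound {X : Set H} {ℓ : H} {C : ℝ}
    (h : ∀ ψ ∈ X, (inner ℝ ℓ ψ : ℝ) ≤ C) : supportFn X ℓ < ⊤ := by
  refine lt_of_le_of_lt (iSup₂_le fun ψ hψ => ?_) (EReal.coe_lt_top C)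
  exact_mod_cast h ψ hψ

lemma bound_of_supportFn_lt_top {X : Set H} {ℓ : H}
    (h : supportFn X ℓ < ⊤) : ∃ C : ℝ, ∀ ψ ∈ X, (inner ℝ ℓ ψ : ℝ) ≤ C := by
  refine ⟨(supportFn X ℓ).toReal, fun ψ hψ => ?_⟩
  have h1 : ((inner ℝ ℓ ψ : ℝ) : EReal) ≤ supportFn X ℓ :=
    le_iSup₂ (f := fun (ψ : H) (_ : ψ ∈ X) => ((inner ℝ ℓ ψ : ℝ) : EReal)) ψ hψ
  have h2 : supportFn X ℓ ≤ ((supportFn X ℓ).toReal : EReal) :=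
    EReal.le_coe_toReal h.ne
  exact_mod_cast h1.trans h2

/-- If `v` is orthogonal to the range of the adjoint of a closed densely defined operator `L`,
then `v` belongs to the domain of `L` and `L v = 0`. -/
lemma mem_domain_and_map_zero_of_orthogonal_adjoint_range
    (L : H →ₗ.[ℝ] F) (hLclosed : L.IsClosed) (hLdense : Dense (L.domain : Set H))
    {v : H} (hv : ∀ z : (L†).domain, (inner ℝ (L† z) v : ℝ) = 0) :
    ∃ hv' : v ∈ L.domain, L ⟨v, hv'⟩ = 0 := by
  classical
  set e : WithLp 2 (H × F) ≃L[ℝ] H × F := WithLp.prodContinuousLinearEquiv 2 ℝ H F with he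
  set G2 : Submodule ℝ (WithLp 2 (H × F)) :=
    L.graph.comap (e.toLinearEquiv : WithLp 2 (H × F) →ₗ[ℝ] H × F) with hG2
  have hG2closed : IsClosed (G2 : Set (WithLp 2 (H × F))) := by
    have : (G2 : Set (WithLp 2 (H × F))) = e ⁻¹' (L.graph : Set (H × F)) := rfl
    rw [this]
    exact hLclosed.preimage e.continuous
  set x₀ : WithLp 2 (H × F) := e.symm (v, 0) with hx₀
  have hx₀mem : x₀ ∈ G2ᗮᗮ := by
    rw [Submodule.mem_orthogonal]
    intro p hp
    -- `p` orthogonal to graph gives an adjoint element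
    have hpgraph : ∀ x : L.domain,
        (inner ℝ (x : H) (e p).1 : ℝ) + inner ℝ (L x) (e p).2 = 0 := by
      intro x
      have hq : e.symm ((x : H), L x) ∈ G2 := by
        simp only [hG2, Submodule.mem_comap]
        have : (e.toLinearEquiv : WithLp 2 (H × F) →ₗ[ℝ] H × F) (e.symm ((x : H), L x))
            = ((x : H), L x) := e.apply_symm_apply _
        rw [this]
        exact L.mem_graph x
      have h0 : (inner ℝ (e.symm ((x : H), L x)) p : ℝ) = 0 :=
        (Submodule.mem_orthogonal _ _).1 hp _ hq
      rw [WithLp.prod_inner_apply] at h0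
      convert h0 using 2
      all_goals rfl
    have hbdom : -(e p).2 ∈ (L†).domain := by
      refine mem_adjoint_domain_of_exists _ ⟨(e p).1, fun x => ?_⟩
      have := hpgraph x
      have hsymm : (inner ℝ ((e p).1) (x : H) : ℝ) = inner ℝ (x : H) ((e p).1) :=
        real_inner_comm _ _
      have hcomm : (inner ℝ ((e p).2) ((L x : F)) : ℝ) = inner ℝ ((L x : F)) ((e p).2) :=
        real_inner_comm _ _
      rw [inner_neg_left, hsymm]
      linarith [hpgraph x, hcomm]
    have hadj : L† ⟨-(e p).2, hbdom⟩ = (e p).1 := by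
      refine adjoint_apply_eq hLdense _ fun x => ?_
      have hsymm : (inner ℝ ((e p).1) (x : H) : ℝ) = inner ℝ (x : H) ((e p).1) :=
        real_inner_comm _ _
      have hcomm : (inner ℝ ((e p).2) ((L x : F)) : ℝ) = inner ℝ ((L x : F)) ((e p).2) :=
        real_inner_comm _ _
      rw [hsymm, inner_neg_left]
      linarith [hpgraph x, hcomm]
    have h1 : (inner ℝ ((e p).1) v : ℝ) = 0 := by
      rw [← hadj]; exact hv _
    rw [WithLp.prod_inner_apply]
    show (inner ℝ ((e p).1) v : ℝ) + inner ℝ ((e p).2) (0 : F) = 0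
    rw [inner_zero_right, add_zero]
    exact h1
  have hclosed : x₀ ∈ G2 := by
    rw [Submodule.orthogonal_orthogonal_eq_closure] at hx₀mem
    have h' : x₀ ∈ (G2.topologicalClosure : Set (WithLp 2 (H × F))) := hx₀mem
    rw [Submodule.topologicalClosure_coe, hG2closed.closure_eq] at h'
    exact h'
  have hgraph : (v, (0 : F)) ∈ L.graph := by
    have hg : (e.toLinearEquiv : WithLp 2 (H × F) →ₗ[ℝ] H × F) x₀ ∈ L.graph :=
      Submodule.mem_comap.mp hclosed
    have he2 : (e.toLinearEquiv : WithLp 2 (H × F) →ₗ[ℝ] H × F) x₀ = (v, 0) :=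
      e.apply_symm_apply _
    rwa [he2] at hg
  rw [LinearPMap.mem_graph_iff] at hgraph
  obtain ⟨w, hw1, hw2⟩ := hgraph
  have hw1' : (w : H) = v := hw1
  have hw2' : L w = 0 := hw2
  refine ⟨hw1' ▸ w.prop, ?_⟩
  have : (⟨v, hw1' ▸ w.prop⟩ : L.domain) = w := Subtype.ext hw1'.symm
  rw [this, hw2']

/-- for convex closed bounded `𝒢` and `𝒳_y ≠ ∅`,
`R(L*) + R(H*) ⊆ dom c(𝒳_y, ·) ∩ (-1) dom c(𝒳_y, ·) ⊆ closure (R(L*) + R(H*))`. -/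
theorem dom_support_a_posteriori (L : H →ₗ.[ℝ] F)
    (hLclosed : L.IsClosed) (hLdense : Dense (L.domain : Set H))
    (Hop : H →L[ℝ] Y) (y : Y)
    (G : Set (F × Y)) (hGconv : Convex ℝ G) (hGclosed : IsClosed G)
    (hGbdd : Bornology.IsBounded G)
    (hXne : (aPostSet L Hop G y).Nonempty) :
    (Set.range (fun z : (L†).domain => L† z) +
        Set.range (ContinuousLinearMap.adjoint Hop) ⊆
      {ℓ : H | supportFn (aPostSet L Hop G y) ℓ < ⊤} ∩
        (-1 : ℝ) • {ℓ : H | supportFn (aPostSet L Hop G y) ℓ < ⊤}) ∧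
    ({ℓ : H | supportFn (aPostSet L Hop G y) ℓ < ⊤} ∩
        (-1 : ℝ) • {ℓ : H | supportFn (aPostSet L Hop G y) ℓ < ⊤} ⊆
      closure (Set.range (fun z : (L†).domain => L† z) +
        Set.range (ContinuousLinearMap.adjoint Hop))) := by
  classical
  set X := aPostSet L Hop G y with hX
  obtain ⟨C, hC⟩ := hGbdd.exists_norm_le
  -- the key uniform bound
  have key : ∀ (z : (L†).domain) (u : Y), ∀ ψ ∈ X,
      (inner ℝ (L† z + ContinuousLinearMap.adjoint Hop u) ψ : ℝ) ≤
        ‖(z : F)‖ * C + ‖u‖ * C + inner ℝ u y := by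
    intro z u ψ hψ
    obtain ⟨hψd, hψG⟩ := hψ
    have h1 : (inner ℝ (L† z) ψ : ℝ) = inner ℝ (z : F) (L ⟨ψ, hψd⟩) :=
      adjoint_isFormalAdjoint hLdense z ⟨ψ, hψd⟩
    have h2 : (inner ℝ (ContinuousLinearMap.adjoint Hop u) ψ : ℝ) = inner ℝ u (Hop ψ) :=
      ContinuousLinearMap.adjoint_inner_left _ _ _
    have hnorm1 : ‖L ⟨ψ, hψd⟩‖ ≤ C :=
      (norm_fst_le (L ⟨ψ, hψd⟩, y - Hop ψ)).trans (hC _ hψG)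
    have hnorm2 : ‖y - Hop ψ‖ ≤ C :=
      (norm_snd_le (L ⟨ψ, hψd⟩, y - Hop ψ)).trans (hC _ hψG)
    have hb1 : (inner ℝ (z : F) (L ⟨ψ, hψd⟩) : ℝ) ≤ ‖(z : F)‖ * C := by
      calc (inner ℝ (z : F) (L ⟨ψ, hψd⟩) : ℝ) ≤ ‖(z : F)‖ * ‖L ⟨ψ, hψd⟩‖ :=
            real_inner_le_norm _ _
        _ ≤ ‖(z : F)‖ * C := by
            exact mul_le_mul_of_nonneg_left hnorm1 (norm_nonneg _)
    have hb2 : -(inner ℝ u (y - Hop ψ) : ℝ) ≤ ‖u‖ * C := by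
      calc -(inner ℝ u (y - Hop ψ) : ℝ) = inner ℝ u (-(y - Hop ψ)) := by
            rw [inner_neg_right]
        _ ≤ ‖u‖ * ‖-(y - Hop ψ)‖ := real_inner_le_norm _ _
        _ = ‖u‖ * ‖y - Hop ψ‖ := by rw [norm_neg]
        _ ≤ ‖u‖ * C := mul_le_mul_of_nonneg_left hnorm2 (norm_nonneg _)
    have hsplit : (inner ℝ u (Hop ψ) : ℝ) = inner ℝ u y - inner ℝ u (y - Hop ψ) := by
      rw [inner_sub_right]; ring
    rw [inner_add_left, h1, h2, hsplit]
    linarith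
  constructor
  · rintro ℓ ⟨a, ⟨z, rfl⟩, b, ⟨u, rfl⟩, rfl⟩
    constructor
    · exact supportFn_lt_top_of_bound (key z u)
    · refine ⟨-(L† z + ContinuousLinearMap.adjoint Hop u), ?_,
        by show (-1 : ℝ) • -(L† z + ContinuousLinearMap.adjoint Hop u)
              = L† z + ContinuousLinearMap.adjoint Hop u
           rw [neg_smul, one_smul, neg_neg]⟩
      have hneg : -(L† z + ContinuousLinearMap.adjoint Hop u)
          = L† (-z) + ContinuousLinearMap.adjoint Hop (-u) := by
        rw [neg_add]
        congr 1
        · exact ((L†).toFun.map_neg z).symm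
        · exact (_root_.map_neg (ContinuousLinearMap.adjoint Hop) u).symm
      rw [hneg]
      exact supportFn_lt_top_of_bound (key (-z) (-u))
  · rintro ℓ ⟨h1, -⟩
    obtain ⟨C₁, hC₁⟩ := bound_of_supportFn_lt_top h1
    obtain ⟨ψ, hψ⟩ := hXne
    obtain ⟨hψd, hψG⟩ := hψ
    set K : Submodule ℝ H := LinearMap.range (L†).toFun ⊔
      LinearMap.range (ContinuousLinearMap.adjoint Hop : Y →ₗ[ℝ] H) with hK
    have hKset : (K : Set H) = Set.range (fun z : (L†).domain => L† z) +
        Set.range (ContinuousLinearMap.adjoint Hop) := by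
      rw [hK, Submodule.coe_sup, LinearMap.coe_range, LinearMap.coe_range]
      rfl
    set Kc := K.topologicalClosure with hKc
    haveI : CompleteSpace Kc := K.isClosed_topologicalClosure.completeSpace_coe
    set ℓ₁ : H := (Submodule.orthogonalProjection Kc ℓ : H) with hℓ₁
    set ℓ₂ : H := ℓ - ℓ₁ with hℓ₂
    have hℓ₂mem : ℓ₂ ∈ Kcᗮ := Submodule.sub_starProjection_mem_orthogonal (K := Kc) ℓ
    have horthc : ∀ w ∈ Kc, (inner ℝ w ℓ₂ : ℝ) = 0 :=
      (Submodule.mem_orthogonal _ _).1 hℓ₂mem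
    have horth : ∀ w ∈ K, (inner ℝ w ℓ₂ : ℝ) = 0 := fun w hw =>
      horthc w (K.le_topologicalClosure hw)
    -- (a) H ℓ₂ = 0
    have hH : Hop ℓ₂ = 0 := by
      have h0 : (inner ℝ (Hop ℓ₂) (Hop ℓ₂) : ℝ) = 0 := by
        rw [← ContinuousLinearMap.adjoint_inner_right, real_inner_comm]
        exact horth _ (Submodule.mem_sup_right ⟨Hop ℓ₂, rfl⟩)
      exact inner_self_eq_zero.1 h0
    -- (b) ℓ₂ ∈ dom L and L ℓ₂ = 0
    obtain ⟨hd, hL0⟩ := mem_domain_and_map_zero_of_orthogonal_adjoint_range L hLclosed hLdense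
      (v := ℓ₂) (fun z => horth _ (Submodule.mem_sup_left ⟨z, rfl⟩))
    -- (c) ψ + t • ℓ₂ ∈ X for all t
    have hts : ∀ t : ℝ, (inner ℝ ℓ ψ : ℝ) + t * ‖ℓ₂‖ ^ 2 ≤ C₁ := by
      intro t
      have hdm : ψ + t • ℓ₂ ∈ L.domain := L.domain.add_mem hψd (L.domain.smul_mem t hd)
      have heq : (⟨ψ + t • ℓ₂, hdm⟩ : L.domain) = ⟨ψ, hψd⟩ + t • ⟨ℓ₂, hd⟩ := rfl
      have hLeq : L ⟨ψ + t • ℓ₂, hdm⟩ = L ⟨ψ, hψd⟩ := by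
        rw [heq, L.map_add, L.map_smul, hL0, smul_zero, add_zero]
      have hHeq : Hop (ψ + t • ℓ₂) = Hop ψ := by
        rw [_root_.map_add, _root_.map_smul, hH, smul_zero, add_zero]
      have hmemX : ψ + t • ℓ₂ ∈ X := ⟨hdm, by rw [hLeq, hHeq]; exact hψG⟩
      have hb := hC₁ _ hmemX
      have hinner : (inner ℝ ℓ (ψ + t • ℓ₂) : ℝ) = inner ℝ ℓ ψ + t * ‖ℓ₂‖ ^ 2 := by
        rw [inner_add_right, real_inner_smul_right]
        congr 1
        have hsum : ℓ = ℓ₁ + ℓ₂ := by rw [hℓ₂]; abel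
        rw [hsum, inner_add_left, horthc ℓ₁ (by exact (Submodule.orthogonalProjection Kc ℓ).prop),
          zero_add, real_inner_self_eq_norm_sq]
      linarith [hinner ▸ hb]
    have hℓ₂zero : ℓ₂ = 0 := by
      by_contra hne
      have hn : (0 : ℝ) < ‖ℓ₂‖ := norm_pos_iff.mpr hne
      have hpos : (0 : ℝ) < ‖ℓ₂‖ ^ 2 := by positivity
      have ht := hts ((C₁ + 1 - inner ℝ ℓ ψ) / ‖ℓ₂‖ ^ 2)
      rw [div_mul_cancel₀ _ hpos.ne'] at ht
      linarith
    have hℓeq : ℓ = ℓ₁ := by rw [← sub_eq_zero]; exact hℓ₂zero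
    have : ℓ ∈ (Kc : Set H) := hℓeq ▸ (Submodule.orthogonalProjection Kc ℓ).prop
    rw [hKc, Submodule.topologicalClosure_coe, hKset] at this
    exact this
end

section
/- Suppose $\operatorname{rank}\begin{pmatrix}F_k\\H_k\end{pmatrix}=n$ for all $k$, where $F_k\in\mathbb{R}^{m\times n}$, $H_k\in\mathbb{R}^{p\times n}$, and let $S,S_k,R_k$ be symmetric positive definite. Define $P_0=F_0'SF_0+H_0'R_0H_0$, $B_k=P_k+C_k'S_kC_k$, $P_{k+1}=H_{k+1}'R_{k+1}H_{k+1}+F_{k+1}'(S_k-S_kC_kB_k^+C_k'S_k)F_{k+1}$. Then each $P_k$ is positive definite (hence invertible), so the index of non-causality $I_k=n-\operatorname{rank}P_k$ equals $0$. -/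
open Matrix

/-- `B` is a Moore–Penrose pseudoinverse of `A`. -/
def IsMPInv {n : ℕ} (A B : Matrix (Fin n) (Fin n) ℝ) : Prop :=
  A * B * A = A ∧ B * A * B = B ∧ (A * B)ᵀ = A * B ∧ (B * A)ᵀ = B * A

open Classical in
/-- The Moore–Penrose pseudoinverse of a real square matrix. -/
noncomputable def pinv {n : ℕ} (A : Matrix (Fin n) (Fin n) ℝ) : Matrix (Fin n) (Fin n) ℝ :=
  if h : ∃ B, IsMPInv A B then h.choose else 0

/-- Uniqueness of the Moore–Penrose pseudoinverse. -/
lemma IsMPInv.unique {n : ℕ} {A B₁ B₂ : Matrix (Fin n) (Fin n) ℝ}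
    (h₁ : IsMPInv A B₁) (h₂ : IsMPInv A B₂) : B₁ = B₂ := by
  obtain ⟨a1, b1, c1, d1⟩ := h₁
  obtain ⟨a2, b2, c2, d2⟩ := h₂
  have hAB : A * B₁ = A * B₂ := by
    calc A * B₁ = (A * B₁)ᵀ := c1.symm
    _ = B₁ᵀ * Aᵀ := Matrix.transpose_mul _ _
    _ = B₁ᵀ * (A * B₂ * A)ᵀ := by rw [a2]
    _ = B₁ᵀ * (Aᵀ * (A * B₂)ᵀ) := by rw [Matrix.transpose_mul]
    _ = B₁ᵀ * Aᵀ * (A * B₂) := by rw [c2, ← Matrix.mul_assoc]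
    _ = (A * B₁)ᵀ * (A * B₂) := by rw [← Matrix.transpose_mul]
    _ = (A * B₁) * (A * B₂) := by rw [c1]
    _ = A * B₁ * A * B₂ := by rw [← Matrix.mul_assoc]
    _ = A * B₂ := by rw [a1]
  have hBA : B₁ * A = B₂ * A := by
    calc B₁ * A = (B₁ * A)ᵀ := d1.symm
    _ = Aᵀ * B₁ᵀ := Matrix.transpose_mul _ _
    _ = (A * B₂ * A)ᵀ * B₁ᵀ := by rw [a2]
    _ = ((B₂ * A)ᵀ * Aᵀ) * B₁ᵀ := by rw [Matrix.mul_assoc, Matrix.transpose_mul]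
    _ = (B₂ * A) * (Aᵀ * B₁ᵀ) := by rw [d2, Matrix.mul_assoc]
    _ = (B₂ * A) * (B₁ * A)ᵀ := by rw [← Matrix.transpose_mul]
    _ = B₂ * A * (B₁ * A) := by rw [d1]
    _ = B₂ * (A * B₁ * A) := by simp only [Matrix.mul_assoc]
    _ = B₂ * A := by rw [a1]
  calc B₁ = B₁ * A * B₁ := b1.symm
  _ = B₂ * A * B₁ := by rw [hBA]
  _ = B₂ * (A * B₁) := by rw [Matrix.mul_assoc]
  _ = B₂ * (A * B₂) := by rw [hAB]
  _ = B₂ * A * B₂ := by rw [Matrix.mul_assoc]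
  _ = B₂ := b2

lemma pinv_eq_of {n : ℕ} {A B : Matrix (Fin n) (Fin n) ℝ} (h : IsMPInv A B) : pinv A = B := by
  have hex : ∃ B, IsMPInv A B := ⟨B, h⟩
  rw [pinv, dif_pos hex]
  exact hex.choose_spec.unique h

lemma pinv_of_isUnit {n : ℕ} {A : Matrix (Fin n) (Fin n) ℝ} (h : IsUnit A.det) :
    pinv A = A⁻¹ := by
  refine pinv_eq_of ?_
  have h1 : A * A⁻¹ = 1 := Matrix.mul_nonsing_inv A h
  have h2 : A⁻¹ * A = 1 := Matrix.nonsing_inv_mul A h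
  refine ⟨?_, ?_, ?_, ?_⟩ <;> simp [h1, h2]

/-- From full column rank, `mulVec` is injective at zero. -/
lemma mulVec_eq_zero_of_rank {q : Type*} [Fintype q] {n : ℕ} (A : Matrix q (Fin n) ℝ)
    (h : A.rank = n) (x : Fin n → ℝ) (hx : A *ᵥ x = 0) : x = 0 := by
  classical
  have hrn := LinearMap.finrank_range_add_finrank_ker A.mulVecLin
  rw [Module.finrank_pi] at hrn
  simp only [Fintype.card_fin] at hrn
  have hr : Module.finrank ℝ (LinearMap.range A.mulVecLin) = n := h
  have hker : Module.finrank ℝ (LinearMap.ker A.mulVecLin) = 0 := by omega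
  have hbot : LinearMap.ker A.mulVecLin = ⊥ := Submodule.finrank_eq_zero.1 hker
  have hmem : x ∈ LinearMap.ker A.mulVecLin := by
    simp [LinearMap.mem_ker, Matrix.mulVecLin_apply, hx]
  rw [hbot, Submodule.mem_bot] at hmem
  exact hmem

/-- Quadratic form of a pullback. -/
lemma quad_pullback {q n : ℕ} (A : Matrix (Fin q) (Fin n) ℝ) (M : Matrix (Fin q) (Fin q) ℝ)
    (x : Fin n → ℝ) : x ⬝ᵥ (Aᵀ * M * A) *ᵥ x = (A *ᵥ x) ⬝ᵥ M *ᵥ (A *ᵥ x) := by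
  rw [← Matrix.mulVec_mulVec, ← Matrix.mulVec_mulVec, Matrix.dotProduct_mulVec,
    Matrix.vecMul_transpose]

/-- Moving a matrix across a dot product. -/
lemma dot_mulVec_symm {q n : ℕ} (A : Matrix (Fin q) (Fin n) ℝ) (u : Fin q → ℝ) (v : Fin n → ℝ) :
    u ⬝ᵥ A *ᵥ v = (Aᵀ *ᵥ u) ⬝ᵥ v := by
  rw [Matrix.dotProduct_mulVec, ← Matrix.mulVec_transpose]

lemma posSemidef_pullback {q n : ℕ} {M : Matrix (Fin q) (Fin q) ℝ} (hM : M.PosSemidef)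
    (A : Matrix (Fin q) (Fin n) ℝ) : (Aᵀ * M * A).PosSemidef := by
  have := hM.conjTranspose_mul_mul_same A
  rwa [Matrix.conjTranspose_eq_transpose_of_trivial] at this

/-- Positive definiteness of a sum of two pullbacks with jointly trivial kernel. -/
lemma posDef_sum_pullback {q r n : ℕ} (A : Matrix (Fin q) (Fin n) ℝ)
    (Bm : Matrix (Fin r) (Fin n) ℝ) {M : Matrix (Fin q) (Fin q) ℝ}
    {N : Matrix (Fin r) (Fin r) ℝ} (hM : M.PosDef) (hN : N.PosDef)
    (hker : ∀ x, A *ᵥ x = 0 → Bm *ᵥ x = 0 → x = 0) :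
    (Aᵀ * M * A + Bmᵀ * N * Bm).PosDef := by
  refine Matrix.PosDef.of_dotProduct_mulVec_pos ((posSemidef_pullback hM.posSemidef A).add
    (posSemidef_pullback hN.posSemidef Bm)).isHermitian (fun x hx => ?_)
  rw [star_trivial, Matrix.add_mulVec, dotProduct_add, quad_pullback, quad_pullback]
  by_cases hA : A *ᵥ x = 0
  · have hB : Bm *ᵥ x ≠ 0 := fun hB => hx (hker x hA hB)
    rw [hA]
    simpa using hN.dotProduct_mulVec_pos hB
  · have h1 := hM.dotProduct_mulVec_pos hA
    have h2 := hN.posSemidef.dotProduct_mulVec_nonneg (Bm *ᵥ x)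
    rw [star_trivial] at h1 h2
    linarith

/-- The key Schur-complement-type positivity. -/
lemma schur_posdef {m n : ℕ} {S : Matrix (Fin m) (Fin m) ℝ} (hS : S.PosDef)
    (C : Matrix (Fin m) (Fin n) ℝ) {Pk : Matrix (Fin n) (Fin n) ℝ} (hP : Pk.PosDef) :
    (S - S * C * (Pk + Cᵀ * S * C)⁻¹ * Cᵀ * S).PosDef := by
  set B := Pk + Cᵀ * S * C with hBdef
  have hB : B.PosDef := hP.add_posSemidef (posSemidef_pullback hS.posSemidef C)
  have hBdet : IsUnit B.det := (Matrix.isUnit_iff_isUnit_det B).1 hB.isUnit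
  have hStr : Sᵀ = S := by
    have := hS.isHermitian.eq
    rwa [Matrix.conjTranspose_eq_transpose_of_trivial] at this
  have hBtr : Bᵀ = B := by
    have := hB.isHermitian.eq
    rwa [Matrix.conjTranspose_eq_transpose_of_trivial] at this
  have hBinvtr : B⁻¹ᵀ = B⁻¹ := by
    rw [Matrix.transpose_nonsing_inv, hBtr]
  refine Matrix.PosDef.of_dotProduct_mulVec_pos ?_ ?_
  · show _ᴴ = _
    rw [Matrix.conjTranspose_eq_transpose_of_trivial, Matrix.transpose_sub, hStr]
    congr 1
    calc (S * C * B⁻¹ * Cᵀ * S)ᵀ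
        = Sᵀ * (Cᵀ)ᵀ * B⁻¹ᵀ * Cᵀ * Sᵀ := by
          simp only [Matrix.transpose_mul, Matrix.transpose_transpose, Matrix.mul_assoc]
    _ = S * C * B⁻¹ * Cᵀ * S := by
          rw [hStr, hBinvtr, Matrix.transpose_transpose]
  · intro x hx
    rw [star_trivial]
    set z := B⁻¹ *ᵥ (Cᵀ *ᵥ (S *ᵥ x)) with hz
    have hBz : B *ᵥ z = Cᵀ *ᵥ (S *ᵥ x) := by
      rw [hz, Matrix.mulVec_mulVec, Matrix.mul_nonsing_inv _ hBdet, Matrix.one_mulVec]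
    have e2 : x ⬝ᵥ S *ᵥ (C *ᵥ z) = z ⬝ᵥ B *ᵥ z := by
      rw [dot_mulVec_symm S, hStr, dot_mulVec_symm C, ← hBz, dotProduct_comm]
    have e3 : (C *ᵥ z) ⬝ᵥ S *ᵥ x = z ⬝ᵥ B *ᵥ z := by
      rw [dotProduct_comm, dot_mulVec_symm C, ← hBz, dotProduct_comm]
    have key1 : x ⬝ᵥ (S * C * B⁻¹ * Cᵀ * S) *ᵥ x = z ⬝ᵥ B *ᵥ z := by
      have e1 : (S * C * B⁻¹ * Cᵀ * S) *ᵥ x = S *ᵥ (C *ᵥ z) := by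
        simp only [← Matrix.mulVec_mulVec, hz]
      rw [e1]
      exact e2
    have hBsplit : z ⬝ᵥ B *ᵥ z = z ⬝ᵥ Pk *ᵥ z + (C *ᵥ z) ⬝ᵥ S *ᵥ (C *ᵥ z) := by
      rw [hBdef, Matrix.add_mulVec, dotProduct_add, quad_pullback]
    have hnn : 0 ≤ (x - C *ᵥ z) ⬝ᵥ S *ᵥ (x - C *ᵥ z) := by
      have := hS.posSemidef.dotProduct_mulVec_nonneg (x - C *ᵥ z)
      rwa [star_trivial] at this
    have hexp : (x - C *ᵥ z) ⬝ᵥ S *ᵥ (x - C *ᵥ z) =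
        x ⬝ᵥ S *ᵥ x - 2 * (z ⬝ᵥ B *ᵥ z) + (C *ᵥ z) ⬝ᵥ S *ᵥ (C *ᵥ z) := by
      rw [Matrix.mulVec_sub, sub_dotProduct, dotProduct_sub, dotProduct_sub, e2, e3]
      ring
    rw [Matrix.sub_mulVec, dotProduct_sub, key1]
    by_cases hzz : z = 0
    · have hz0 : z ⬝ᵥ B *ᵥ z = 0 := by simp [hzz]
      rw [hz0, sub_zero]
      exact hS.dotProduct_mulVec_pos hx
    · have hPzpos : 0 < z ⬝ᵥ Pk *ᵥ z := by
        have := hP.dotProduct_mulVec_pos hzz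
        rwa [star_trivial] at this
      linarith [hnn, hexp, hBsplit, hPzpos]

/-- if `rank (F_k; H_k) = n` for all `k`, and `S`, `S_k`, `R_k` are symmetric
positive definite, then every `P_k` of the minimax filter recursion is positive definite, so the
index of non-causality `I_k = n - rank P_k` equals `0`. -/
theorem index_of_noncausality_zero {m n p : ℕ}
    (F : ℕ → Matrix (Fin m) (Fin n) ℝ) (H : ℕ → Matrix (Fin p) (Fin n) ℝ)
    (C : ℕ → Matrix (Fin m) (Fin n) ℝ)
    (hrank : ∀ k, (Matrix.fromRows (F k) (H k)).rank = n)
    (S : Matrix (Fin m) (Fin m) ℝ) (hS : S.PosDef)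
    (Sw : ℕ → Matrix (Fin m) (Fin m) ℝ) (hSw : ∀ k, (Sw k).PosDef)
    (R : ℕ → Matrix (Fin p) (Fin p) ℝ) (hR : ∀ k, (R k).PosDef)
    (P : ℕ → Matrix (Fin n) (Fin n) ℝ)
    (hP0 : P 0 = (F 0)ᵀ * S * F 0 + (H 0)ᵀ * R 0 * H 0)
    (B : ℕ → Matrix (Fin n) (Fin n) ℝ)
    (hB : ∀ k, B k = P k + (C k)ᵀ * Sw k * C k)
    (hPrec : ∀ k, P (k + 1) =
      (H (k + 1))ᵀ * R (k + 1) * H (k + 1) +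
        (F (k + 1))ᵀ * (Sw k - Sw k * C k * pinv (B k) * (C k)ᵀ * Sw k) * F (k + 1)) :
    ∀ k, (P k).PosDef ∧ n - (P k).rank = 0 := by
  have hker : ∀ k, ∀ x, F k *ᵥ x = 0 → H k *ᵥ x = 0 → x = 0 := by
    intro k x hF hH
    refine mulVec_eq_zero_of_rank _ (hrank k) x ?_
    rw [Matrix.fromRows_mulVec, hF, hH]
    ext (i | i) <;> rfl
  have hPD : ∀ k, (P k).PosDef := by
    intro k
    induction k with
    | zero =>
      rw [hP0]
      exact posDef_sum_pullback _ _ hS (hR 0) (hker 0)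
    | succ k ih =>
      rw [hPrec k]
      have hBpos : (B k).PosDef := by
        rw [hB k]
        exact ih.add_posSemidef (posSemidef_pullback (hSw k).posSemidef (C k))
      have hBdet : IsUnit (B k).det := (Matrix.isUnit_iff_isUnit_det _).1 hBpos.isUnit
      rw [pinv_of_isUnit hBdet]
      have hM : (Sw k - Sw k * C k * (B k)⁻¹ * (C k)ᵀ * Sw k).PosDef := by
        rw [hB k]
        exact schur_posdef (hSw k) (C k) ih
      exact posDef_sum_pullback _ _ (hR (k + 1)) hM
        (fun x hH hF => hker (k + 1) x hF hH)
  intro k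
  refine ⟨hPD k, ?_⟩
  have hrk : (P k).rank = n := by
    rw [Matrix.rank_of_isUnit _ (hPD k).isUnit, Fintype.card_fin]
  omega
end
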